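/- Let Δ be a Fano triangle (a 2-dimensional Fano simplex) of Gorenstein index g. If the reduced weight system of Δ is Q_Δ^red = (1,1,1), then g is odd. -/

import Mathlib

open Finset Pointwise

/-- Cast an integer vector to a rational vector. -/
def toQ {d : ℕ} (v : Fin d → ℤ) : Fin d → ℚ := fun j => (v j : ℚ)

/-- An integer vector is primitive if the gcd of its entries is 1. -/
def IsPrimitive {d : ℕ} (v : Fin d → ℤ) : Prop := Finset.univ.gcd v = 1

/-- The origin lies in the interior of the simplex with the given vertices,
i.e. the origin is a convex combination of the vertices with positive coefficients. -/
def OriginInInterior {d : ℕ} (v : Fin (d + 1) → Fin d → ℚ) : Prop :=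
  ∃ w : Fin (d + 1) → ℚ, (∀ i, 0 < w i) ∧ ∑ i, w i = 1 ∧ ∀ j, ∑ i, w i * v i j = 0

/-- A Fano simplex, given by its tuple of vertices: the vertices are primitive integer
vectors, affinely independent, and the origin lies in the interior. -/
def IsFanoSimplex {d : ℕ} (v : Fin (d + 1) → Fin d → ℤ) : Prop :=
  AffineIndependent ℚ (fun i => toQ (v i)) ∧ (∀ i, IsPrimitive (v i)) ∧
    OriginInInterior fun i => toQ (v i)

/-- The simplex spanned by the given vertices. -/
def simplexHull {d : ℕ} (v : Fin (d + 1) → Fin d → ℚ) : Set (Fin d → ℚ) :=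
  convexHull ℚ (Set.range v)

/-- The dual body `Δ* = {u : ⟨u,v⟩ ≥ -1 for all v ∈ Δ}`. -/
def dualBody {d : ℕ} (S : Set (Fin d → ℚ)) : Set (Fin d → ℚ) :=
  {u | ∀ x ∈ S, -1 ≤ ∑ j, u j * x j}

/-- A set is a lattice polytope iff it is the convex hull of its integral points
(equivalently, all its vertices are lattice points). -/
def IsLatticeSet {d : ℕ} (S : Set (Fin d → ℚ)) : Prop :=
  S = convexHull ℚ {x ∈ S | ∀ j, ∃ z : ℤ, x j = (z : ℚ)}

/-- The Gorenstein index: the least positive integer `g` such that `g • Δ*` is a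
lattice polytope. -/
noncomputable def gorensteinIndex {d : ℕ} (v : Fin (d + 1) → Fin d → ℚ) : ℕ :=
  sInf {g : ℕ | 0 < g ∧ IsLatticeSet ((g : ℚ) • dualBody (simplexHull v))}

/-- The normalized volume `d! · vol(Δ)` of the simplex with the given vertices. -/
def normVol {d : ℕ} (v : Fin (d + 1) → Fin d → ℚ) : ℚ :=
  |(Matrix.of fun i j : Fin d => v i.succ j - v 0 j).det|

/-- Two (Fano) simplices, given by their vertex tuples, are isomorphic iff some
unimodular integer matrix maps the vertex set of one onto the vertex set of the other. -/
def IsIsomorphicTo {d : ℕ} (v w : Fin (d + 1) → Fin d → ℤ) : Prop :=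
  ∃ (U : Matrix (Fin d) (Fin d) ℤ) (σ : Equiv.Perm (Fin (d + 1))),
    IsUnit U.det ∧ ∀ i, U.mulVec (v i) = w (σ i)


/-- The weight system of a simplex: `q_i = |det(v_j : j ≠ i)|`. -/
def weight {d : ℕ} (u : Fin (d + 1) → Fin d → ℚ) (i : Fin (d + 1)) : ℚ :=
  |(Matrix.of fun r c : Fin d => u (i.succAbove r) c).det|

private lemma aux_cancel {a b c d x0 x1 y0 y1 : ℚ} (hD : a * d - b * c ≠ 0)
    (h1 : a * x0 + b * x1 = a * y0 + b * y1)
    (h2 : c * x0 + d * x1 = c * y0 + d * y1) : x0 = y0 ∧ x1 = y1 := by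
  constructor
  · exact mul_left_cancel₀ hD (by linear_combination d * h1 - b * h2)
  · exact mul_left_cancel₀ hD (by linear_combination a * h2 - c * h1)

noncomputable section FanoCore

def dd (vQ : Fin 3 → Fin 2 → ℚ) : ℚ := vQ 0 0 * vQ 1 1 - vQ 0 1 * vQ 1 0

def uu (vQ : Fin 3 → Fin 2 → ℚ) : Fin 3 → Fin 2 → ℚ :=
  ![![(2 * vQ 1 1 + vQ 0 1) / dd vQ, (-(2 * vQ 1 0) - vQ 0 0) / dd vQ],
    ![(-(vQ 1 1) - 2 * vQ 0 1) / dd vQ, (vQ 1 0 + 2 * vQ 0 0) / dd vQ],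
    ![(vQ 0 1 - vQ 1 1) / dd vQ, (vQ 1 0 - vQ 0 0) / dd vQ]]

variable {vQ : Fin 3 → Fin 2 → ℚ}

lemma pair_uu (hsum : ∀ j, vQ 0 j + vQ 1 j + vQ 2 j = 0) (hD : dd vQ ≠ 0) (i j : Fin 3) :
    ∑ k, uu vQ i k * vQ j k = if i = j then 2 else -1 := by
  have hD' : vQ 0 0 * vQ 1 1 - vQ 0 1 * vQ 1 0 ≠ 0 := hD
  have e0 : vQ 2 0 = -vQ 0 0 - vQ 1 0 := by linarith [hsum 0]
  have e1 : vQ 2 1 = -vQ 0 1 - vQ 1 1 := by linarith [hsum 1]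
  have hD'' : vQ 1 1 * vQ 0 0 - vQ 0 1 * vQ 1 0 ≠ 0 := by rwa [mul_comm (vQ 1 1)]
  fin_cases i <;> fin_cases j <;>
    simp only [uu, dd, Fin.sum_univ_two, Matrix.cons_val', Matrix.cons_val_zero,
      Matrix.cons_val_one, Matrix.head_cons, Matrix.head_fin_const, Fin.isValue, e0, e1,
      Fin.mk_one, Fin.zero_eta, Fin.reduceFinMk, Fin.reduceEq, reduceIte, Matrix.cons_val] <;>
    norm_num <;> field_simp <;> ring


lemma convex_halfspaces (vQ : Fin 3 → Fin 2 → ℚ) (γ : ℚ) :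
    Convex ℚ {u : Fin 2 → ℚ | ∀ j : Fin 3, -γ ≤ ∑ k, u k * vQ j k} := by
  intro x hx y hy a b ha hb hab j
  have hxj := hx j
  have hyj := hy j
  simp only [Set.mem_setOf_eq, Fin.sum_univ_two, Pi.add_apply, Pi.smul_apply,
    smul_eq_mul] at hxj hyj ⊢
  have h1 := mul_le_mul_of_nonneg_left hxj ha
  have h2 := mul_le_mul_of_nonneg_left hyj hb
  have h3 : a * (-γ) + b * (-γ) = -γ := by linear_combination (-γ) * hab
  linarith

lemma hull_subset_halfspaces (hsum : ∀ j, vQ 0 j + vQ 1 j + vQ 2 j = 0) (hD : dd vQ ≠ 0) :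
    convexHull ℚ (Set.range (uu vQ)) ⊆
      {u : Fin 2 → ℚ | ∀ j : Fin 3, -1 ≤ ∑ k, u k * vQ j k} := by
  apply convexHull_min _ (convex_halfspaces vQ 1)
  rintro _ ⟨i, rfl⟩ j
  have h := pair_uu hsum hD i j
  simp only [Set.mem_setOf_eq, h]
  split_ifs <;> norm_num

lemma halfspaces_subset_hull (hsum : ∀ j, vQ 0 j + vQ 1 j + vQ 2 j = 0) (hD : dd vQ ≠ 0) :
    {u : Fin 2 → ℚ | ∀ j : Fin 3, -1 ≤ ∑ k, u k * vQ j k} ⊆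
      convexHull ℚ (Set.range (uu vQ)) := by
  intro x hx
  have hD' : vQ 0 0 * vQ 1 1 - vQ 0 1 * vQ 1 0 ≠ 0 := hD
  have e0 : vQ 2 0 = -vQ 0 0 - vQ 1 0 := by linarith [hsum 0]
  have e1 : vQ 2 1 = -vQ 0 1 - vQ 1 1 := by linarith [hsum 1]
  set c : Fin 3 → ℚ := fun i => ((∑ k, x k * vQ i k) + 1) / 3 with hc
  have hc0 : ∀ i, 0 ≤ c i := by
    intro i
    have := hx i
    rw [hc]
    simp only
    linarith
  have hcsum : ∑ i, c i = 1 := by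
    simp only [hc, Fin.sum_univ_three, Fin.sum_univ_two, e0, e1]
    ring
  have hxeq : x = Finset.univ.centerMass c (uu vQ) := by
    rw [Finset.centerMass_eq_of_sum_1 _ _ hcsum]
    funext k
    have hk : (∑ i, c i • uu vQ i) k = ∑ i, c i * uu vQ i k := by
      simp [Finset.sum_apply]
    rw [hk]
    fin_cases k <;>
      · simp only [hc, uu, dd, Fin.sum_univ_three, Fin.sum_univ_two, Matrix.cons_val',
          Matrix.cons_val_zero, Matrix.cons_val_one, Matrix.head_cons, Matrix.head_fin_const,
          Fin.isValue, e0, e1, Fin.zero_eta, Fin.mk_one, Fin.reduceFinMk, Matrix.cons_val]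
        field_simp
        ring
  rw [hxeq]
  exact Finset.centerMass_mem_convexHull _ (fun i _ => hc0 i) (by rw [hcsum]; norm_num)
    (fun i _ => Set.mem_range_self i)

lemma Dset_eq_hull (hsum : ∀ j, vQ 0 j + vQ 1 j + vQ 2 j = 0) (hD : dd vQ ≠ 0) :
    {u : Fin 2 → ℚ | ∀ j : Fin 3, -1 ≤ ∑ k, u k * vQ j k} =
      convexHull ℚ (Set.range (uu vQ)) :=
  Set.Subset.antisymm (halfspaces_subset_hull hsum hD) (hull_subset_halfspaces hsum hD)

lemma smul_Dset_eq (γ : ℚ) (hγ : 0 < γ) :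
    γ • {u : Fin 2 → ℚ | ∀ j : Fin 3, -1 ≤ ∑ k, u k * vQ j k} =
      {u : Fin 2 → ℚ | ∀ j : Fin 3, -γ ≤ ∑ k, u k * vQ j k} := by
  ext x
  rw [Set.mem_smul_set_iff_inv_smul_mem₀ (ne_of_gt hγ)]
  have hγγ : γ * γ⁻¹ = 1 := mul_inv_cancel₀ (ne_of_gt hγ)
  constructor
  · intro h j
    have h1 := h j
    simp only [Set.mem_setOf_eq, Fin.sum_univ_two, Pi.smul_apply, smul_eq_mul] at h1 ⊢
    have h2 : γ * (-1) ≤ γ * (γ⁻¹ * x 0 * vQ j 0 + γ⁻¹ * x 1 * vQ j 1) :=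
      mul_le_mul_of_nonneg_left h1 hγ.le
    nlinarith [h2, hγγ]
  · intro h j
    have h1 := h j
    simp only [Set.mem_setOf_eq, Fin.sum_univ_two, Pi.smul_apply, smul_eq_mul] at h1 ⊢
    nlinarith [mul_le_mul_of_nonneg_left h1 (inv_nonneg.mpr hγ.le), hγγ]


lemma lattice_iff (hsum : ∀ j, vQ 0 j + vQ 1 j + vQ 2 j = 0) (hD : dd vQ ≠ 0)
    (g : ℕ) (hg : 0 < g) :
    IsLatticeSet ((g : ℚ) • {u : Fin 2 → ℚ | ∀ j : Fin 3, -1 ≤ ∑ k, u k * vQ j k}) ↔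
      ∀ i k, ∃ z : ℤ, (g : ℚ) * uu vQ i k = z := by
  have hγ : (0 : ℚ) < g := by exact_mod_cast hg
  set S : Set (Fin 2 → ℚ) :=
    (g : ℚ) • {u : Fin 2 → ℚ | ∀ j : Fin 3, -1 ≤ ∑ k, u k * vQ j k} with hS
  set w : Fin 3 → Fin 2 → ℚ := fun i => (g : ℚ) • uu vQ i with hwdef
  have hhull : S = convexHull ℚ (Set.range w) := by
    rw [hS, Dset_eq_hull hsum hD, ← convexHull_smul, ← Set.smul_set_range]
  have hhalf : S = {u : Fin 2 → ℚ | ∀ j : Fin 3, -(g:ℚ) ≤ ∑ k, u k * vQ j k} :=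
    smul_Dset_eq (g : ℚ) hγ
  have hwmem : ∀ i, w i ∈ S := fun i => by
    rw [hhull]; exact subset_convexHull ℚ _ (Set.mem_range_self i)
  constructor
  · intro hlat i
    have hmem : w i ∈ convexHull ℚ {x ∈ S | ∀ j, ∃ z : ℤ, x j = (z : ℚ)} := by
      rw [← hlat]; exact hwmem i
    rw [_root_.convexHull_eq] at hmem
    obtain ⟨ι, t, wt, z, hw0, hw1, hzT, hcm⟩ := hmem
    have key : ∀ j : Fin 3, j ≠ i → ∀ k ∈ t, wt k ≠ 0 →
        ∑ m, z k m * vQ j m = -(g : ℚ) := by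
      intro j hj
      have hpair : ∑ m, w i m * vQ j m = -(g : ℚ) := by
        have h := pair_uu hsum hD i j
        rw [if_neg (Ne.symm hj)] at h
        simp only [hwdef, Pi.smul_apply, smul_eq_mul, Fin.sum_univ_two] at h ⊢
        linear_combination (g : ℚ) * h
      have hsum_eq : ∑ k ∈ t, wt k * (∑ m, z k m * vQ j m) = -(g : ℚ) := by
        have h1 : t.centerMass wt z = w i := hcm
        rw [Finset.centerMass_eq_of_sum_1 _ _ hw1] at h1
        calc ∑ k ∈ t, wt k * (∑ m, z k m * vQ j m)
            = ∑ m : Fin 2, (∑ k ∈ t, wt k • z k) m * vQ j m := by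
              simp only [Finset.sum_apply, Pi.smul_apply, smul_eq_mul, Fin.sum_univ_two]
              rw [Finset.sum_mul, Finset.sum_mul, ← Finset.sum_add_distrib]
              exact Finset.sum_congr rfl fun k _ => by ring
          _ = ∑ m : Fin 2, w i m * vQ j m := by rw [h1]
          _ = -(g : ℚ) := hpair
      have hlb : ∀ k ∈ t, -(g : ℚ) ≤ ∑ m, z k m * vQ j m := by
        intro k hk
        have hz2 : z k ∈ S := (hzT k hk).1
        rw [hhalf] at hz2
        exact hz2 j
      intro k hk hwk
      by_contra hne
      have hlt : -(g : ℚ) < ∑ m, z k m * vQ j m := lt_of_le_of_ne (hlb k hk) (Ne.symm hne)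
      have h1 : ∑ k ∈ t, wt k * (-(g : ℚ)) < ∑ k ∈ t, wt k * (∑ m, z k m * vQ j m) :=
        Finset.sum_lt_sum (fun a ha => mul_le_mul_of_nonneg_left (hlb a ha) (hw0 a ha))
          ⟨k, hk, mul_lt_mul_of_pos_left hlt (lt_of_le_of_ne (hw0 k hk) (Ne.symm hwk))⟩
      rw [← Finset.sum_mul, hw1, hsum_eq] at h1
      linarith
    have hex : ∃ k0 ∈ t, wt k0 ≠ 0 := by
      by_contra h
      push_neg at h
      have : ∑ k ∈ t, wt k = 0 := Finset.sum_eq_zero h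
      rw [hw1] at this
      norm_num at this
    obtain ⟨k0, hk0t, hk0⟩ := hex
    -- z k0 = w i
    have hzint := (hzT k0 hk0t).2
    have hweq : z k0 0 = w i 0 ∧ z k0 1 = w i 1 := by
      have hD' : vQ 0 0 * vQ 1 1 - vQ 0 1 * vQ 1 0 ≠ 0 := hD
      have e0 : vQ 2 0 = -vQ 0 0 - vQ 1 0 := by linarith [hsum 0]
      have e1 : vQ 2 1 = -vQ 0 1 - vQ 1 1 := by linarith [hsum 1]
      have hwp : ∀ j : Fin 3, j ≠ i → ∑ m, w i m * vQ j m = -(g : ℚ) := by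
        intro j hj
        have h := pair_uu hsum hD i j
        rw [if_neg (Ne.symm hj)] at h
        simp only [hwdef, Pi.smul_apply, smul_eq_mul, Fin.sum_univ_two] at h ⊢
        linear_combination (g : ℚ) * h
      fin_cases i
      · have k1 := key 1 (by decide) k0 hk0t hk0
        have k2 := key 2 (by decide) k0 hk0t hk0
        have w1 := hwp 1 (by decide)
        have w2 := hwp 2 (by decide)
        simp only [Fin.sum_univ_two] at k1 k2 w1 w2
        exact aux_cancel (a := vQ 1 0) (b := vQ 1 1) (c := vQ 2 0) (d := vQ 2 1)
          (by rw [e0, e1]; intro h; apply hD'; linarith)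
          (by linear_combination k1 - w1) (by linear_combination k2 - w2)
      · have k1 := key 0 (by decide) k0 hk0t hk0
        have k2 := key 2 (by decide) k0 hk0t hk0
        have w1 := hwp 0 (by decide)
        have w2 := hwp 2 (by decide)
        simp only [Fin.sum_univ_two] at k1 k2 w1 w2
        exact aux_cancel (a := vQ 0 0) (b := vQ 0 1) (c := vQ 2 0) (d := vQ 2 1)
          (by rw [e0, e1]; intro h; apply hD'; linarith)
          (by linear_combination k1 - w1) (by linear_combination k2 - w2)
      · have k1 := key 0 (by decide) k0 hk0t hk0
        have k2 := key 1 (by decide) k0 hk0t hk0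
        have w1 := hwp 0 (by decide)
        have w2 := hwp 1 (by decide)
        simp only [Fin.sum_univ_two] at k1 k2 w1 w2
        exact aux_cancel (a := vQ 0 0) (b := vQ 0 1) (c := vQ 1 0) (d := vQ 1 1)
          hD' (by linear_combination k1 - w1) (by linear_combination k2 - w2)
    intro k
    obtain ⟨zz, hzz⟩ := hzint k
    refine ⟨zz, ?_⟩
    have : w i k = (zz : ℚ) := by
      rw [← hzz]
      fin_cases k
      · exact hweq.1.symm
      · exact hweq.2.symm
    simpa only [hwdef, Pi.smul_apply, smul_eq_mul] using this
  · intro hint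
    apply Set.Subset.antisymm
    · rw [hhull]
      apply convexHull_mono
      rintro _ ⟨i, rfl⟩
      refine ⟨subset_convexHull ℚ _ (Set.mem_range_self i), fun k => ?_⟩
      obtain ⟨zz, hzz⟩ := hint i k
      exact ⟨zz, by simpa only [hwdef, Pi.smul_apply, smul_eq_mul] using hzz⟩
    · apply convexHull_min (Set.sep_subset _ _)
      rw [hhalf]
      exact convex_halfspaces vQ (g : ℚ)

lemma dualBody_simplexHull (vQ : Fin 3 → Fin 2 → ℚ) :
    dualBody (simplexHull vQ) = {u : Fin 2 → ℚ | ∀ j : Fin 3, -1 ≤ ∑ k, u k * vQ j k} := by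
  ext u
  constructor
  · intro h j
    exact h (vQ j) (subset_convexHull ℚ _ (Set.mem_range_self j))
  · intro h x hx
    have hsub : convexHull ℚ (Set.range vQ) ⊆ {y : Fin 2 → ℚ | -1 ≤ ∑ k, u k * y k} := by
      apply convexHull_min
      · rintro _ ⟨j, rfl⟩
        exact h j
      · intro p hp q hq a b ha hb hab
        simp only [Set.mem_setOf_eq, Fin.sum_univ_two, Pi.add_apply, Pi.smul_apply,
          smul_eq_mul] at hp hq ⊢
        have h1 := mul_le_mul_of_nonneg_left hp ha
        have h2 := mul_le_mul_of_nonneg_left hq hb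
        have h3 : a * (-1 : ℚ) + b * (-1) = -1 := by linear_combination (-1 : ℚ) * hab
        linarith
    exact hsub hx

end FanoCore

private lemma den_dvd_of_mul_int (q : ℚ) (n : ℕ) (h : ∃ z : ℤ, (n : ℚ) * q = z) :
    q.den ∣ n := by
  obtain ⟨z, hz⟩ := h
  have h2 : (n : ℤ) * q.num = z * q.den := by
    have h1 : (n : ℚ) * (q * q.den) = z * q.den := by rw [← mul_assoc, hz]
    rw [Rat.mul_den_eq_num] at h1
    exact_mod_cast h1
  have h3 : (q.den : ℤ) ∣ (n : ℤ) * q.num := ⟨z, by linarith⟩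
  have h4 : q.den ∣ n * q.num.natAbs := by
    have := Int.natAbs_dvd_natAbs.mpr h3
    simpa [Int.natAbs_mul] using this
  exact (Nat.Coprime.symm q.reduced).dvd_of_dvd_mul_right h4

private lemma mul_int_of_den_dvd (q : ℚ) (n : ℕ) (h : q.den ∣ n) :
    ∃ z : ℤ, (n : ℚ) * q = z := by
  obtain ⟨m, rfl⟩ := h
  refine ⟨q.num * m, ?_⟩
  push_cast
  rw [mul_comm (q.den : ℚ) (m : ℚ), mul_assoc, Rat.den_mul_eq_num]
  ring

private lemma zmod2_det : ∀ A B C D : ZMod 2, ¬(A = 0 ∧ B = 0) → ¬(C = 0 ∧ D = 0) →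
    ¬(A + C = 0 ∧ B + D = 0) → A * D - B * C ≠ 0 := by decide


private lemma weight_fin2 (vQ : Fin 3 → Fin 2 → ℚ) :
    weight vQ 0 = |vQ 1 0 * vQ 2 1 - vQ 1 1 * vQ 2 0| ∧
    weight vQ 1 = |vQ 0 0 * vQ 2 1 - vQ 0 1 * vQ 2 0| ∧
    weight vQ 2 = |vQ 0 0 * vQ 1 1 - vQ 0 1 * vQ 1 0| := by
  refine ⟨?_, ?_, ?_⟩ <;>
    · rw [weight, Matrix.det_fin_two]
      norm_num [Fin.succAbove, Fin.lt_def]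

/-- If a Fano triangle of Gorenstein index `g` has reduced weight
system `(1,1,1)`, i.e. its weight system is `λ·(1,1,1)` for some `λ > 0`, then `g`
is odd. -/
theorem fano_triangle_weight_111_odd_index
    (g : ℕ)
    (v : Fin 3 → Fin 2 → ℤ)
    (hFano : IsFanoSimplex v)
    (hGor : gorensteinIndex (fun i => toQ (v i)) = g)
    (hred : ∃ lam : ℚ, 0 < lam ∧ ∀ i, weight (fun i => toQ (v i)) i = lam * 1) :
    Odd g := by
  classical
  obtain ⟨haff, hprim, horig⟩ := hFano
  obtain ⟨lam, hlam, hwt⟩ := hred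
  obtain ⟨wt, hwpos, hwsum, hworig⟩ := horig
  set vQ : Fin 3 → Fin 2 → ℚ := fun i => toQ (v i) with hvQ
  have hvQc : ∀ i k, vQ i k = ((v i k : ℤ) : ℚ) := fun i k => rfl
  have hq0 : |vQ 1 0 * vQ 2 1 - vQ 1 1 * vQ 2 0| = lam := by
    rw [← (weight_fin2 vQ).1, hwt 0, mul_one]
  have hq1 : |vQ 0 0 * vQ 2 1 - vQ 0 1 * vQ 2 0| = lam := by
    rw [← (weight_fin2 vQ).2.1, hwt 1, mul_one]
  have hq2 : |vQ 0 0 * vQ 1 1 - vQ 0 1 * vQ 1 0| = lam := by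
    rw [← (weight_fin2 vQ).2.2, hwt 2, mul_one]
  have hA0 : wt 0 * vQ 0 0 + wt 1 * vQ 1 0 + wt 2 * vQ 2 0 = 0 := by
    have := hworig 0; rwa [Fin.sum_univ_three] at this
  have hA1 : wt 0 * vQ 0 1 + wt 1 * vQ 1 1 + wt 2 * vQ 2 1 = 0 := by
    have := hworig 1; rwa [Fin.sum_univ_three] at this
  have hw02 : wt 0 = wt 2 := by
    have hc1 : wt 0 * (vQ 0 0 * vQ 1 1 - vQ 0 1 * vQ 1 0)
        = wt 2 * (vQ 1 0 * vQ 2 1 - vQ 1 1 * vQ 2 0) := by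
      linear_combination vQ 1 1 * hA0 - vQ 1 0 * hA1
    have h := congrArg abs hc1
    rw [abs_mul, abs_mul, abs_of_pos (hwpos 0), abs_of_pos (hwpos 2), hq2, hq0] at h
    exact mul_right_cancel₀ (ne_of_gt hlam) h
  have hw12 : wt 1 = wt 2 := by
    have hc2 : wt 1 * (vQ 0 0 * vQ 1 1 - vQ 0 1 * vQ 1 0)
        = -(wt 2 * (vQ 0 0 * vQ 2 1 - vQ 0 1 * vQ 2 0)) := by
      linear_combination vQ 0 0 * hA1 - vQ 0 1 * hA0
    have h := congrArg abs hc2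
    rw [abs_neg, abs_mul, abs_mul, abs_of_pos (hwpos 1), abs_of_pos (hwpos 2), hq2, hq1] at h
    exact mul_right_cancel₀ (ne_of_gt hlam) h
  have hw01 : wt 0 = wt 1 := hw02.trans hw12.symm
  have hsumQ : ∀ j, vQ 0 j + vQ 1 j + vQ 2 j = 0 := by
    intro j
    have hA : wt 0 * vQ 0 j + wt 1 * vQ 1 j + wt 2 * vQ 2 j = 0 := by
      have := hworig j; rwa [Fin.sum_univ_three] at this
    have h : wt 0 * (vQ 0 j + vQ 1 j + vQ 2 j) = 0 := by
      linear_combination hA + vQ 1 j * hw01 + vQ 2 j * hw02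
    exact (mul_eq_zero.mp h).resolve_left (ne_of_gt (hwpos 0))
  have hDne : dd vQ ≠ 0 := by
    intro h
    have h' : vQ 0 0 * vQ 1 1 - vQ 0 1 * vQ 1 0 = 0 := h
    rw [h', abs_zero] at hq2
    linarith
  have hsumZ : ∀ j, v 0 j + v 1 j + v 2 j = 0 := by
    intro j
    have := hsumQ j
    rw [hvQc 0 j, hvQc 1 j, hvQc 2 j] at this
    exact_mod_cast this
  set DZ : ℤ := v 0 0 * v 1 1 - v 0 1 * v 1 0 with hDZdef
  have hcast : ((DZ : ℚ)) = dd vQ := by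
    rw [hDZdef, dd, hvQc, hvQc, hvQc, hvQc]; push_cast; ring
  have hDZ : DZ ≠ 0 := by
    intro h
    apply hDne
    rw [← hcast, h, Int.cast_zero]
  -- parity
  have hoddD : Odd DZ := by
    rcases Int.even_or_odd DZ with he | ho
    · exfalso
      have hnz : ∀ i : Fin 3, ¬(((v i 0 : ℤ) : ZMod 2) = 0 ∧ ((v i 1 : ℤ) : ZMod 2) = 0) := by
        rintro i ⟨h0, h1⟩
        rw [ZMod.intCast_zmod_eq_zero_iff_dvd] at h0 h1
        have hg2 : (2 : ℤ) ∣ Finset.univ.gcd (v i) :=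
          Finset.dvd_gcd (fun k _ => by
            fin_cases k
            · exact_mod_cast h0
            · exact_mod_cast h1)
        have hone : Finset.univ.gcd (v i) = 1 := hprim i
        rw [hone] at hg2
        norm_num at hg2
      have h3 : ¬((((v 0 0 : ℤ) : ZMod 2) + ((v 1 0 : ℤ) : ZMod 2) = 0) ∧
          (((v 0 1 : ℤ) : ZMod 2) + ((v 1 1 : ℤ) : ZMod 2) = 0)) := by
        rintro ⟨h0, h1⟩
        apply hnz 2
        constructor
        · have hv : (v 2 0 : ℤ) = -(v 0 0 + v 1 0) := by linarith [hsumZ 0]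
          rw [hv]; push_cast; rw [h0]; ring
        · have hv : (v 2 1 : ℤ) = -(v 0 1 + v 1 1) := by linarith [hsumZ 1]
          rw [hv]; push_cast; rw [h1]; ring
      have hd := zmod2_det _ _ _ _ (hnz 0) (hnz 1) h3
      apply hd
      have hz : ((DZ : ZMod 2)) = 0 := by
        rw [ZMod.intCast_zmod_eq_zero_iff_dvd]
        exact_mod_cast he.two_dvd
      calc ((v 0 0 : ℤ) : ZMod 2) * ((v 1 1 : ℤ) : ZMod 2)
            - ((v 0 1 : ℤ) : ZMod 2) * ((v 1 0 : ℤ) : ZMod 2)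
          = ((DZ : ZMod 2)) := by rw [hDZdef]; push_cast; ring
        _ = 0 := hz
    · exact ho
  set DA : ℕ := DZ.natAbs with hDAdef
  have hDAodd : Odd DA := Int.natAbs_odd.mpr hoddD
  have hDApos : 0 < DA := Int.natAbs_pos.mpr hDZ
  -- integrality of DZ * u
  have hZint : ∀ i k, ∃ z : ℤ, ((DZ : ℚ)) * uu vQ i k = z := by
    intro i k
    have hDcast : ∀ z : ℤ, ((DZ : ℚ)) * ((z : ℚ) / dd vQ) = z := by
      intro z
      rw [hcast]
      field_simp
    fin_cases i <;> fin_cases k <;>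
      simp only [Fin.zero_eta, Fin.mk_one, Fin.reduceFinMk, Fin.isValue]
    · refine ⟨2 * v 1 1 + v 0 1, ?_⟩
      have huv : uu vQ 0 0 = ((2 * v 1 1 + v 0 1 : ℤ) : ℚ) / dd vQ := by
        show (2 * vQ 1 1 + vQ 0 1) / dd vQ = _
        rw [hvQc, hvQc]; push_cast; ring_nf
      rw [huv, hDcast]
    · refine ⟨-(2 * v 1 0) - v 0 0, ?_⟩
      have huv : uu vQ 0 1 = ((-(2 * v 1 0) - v 0 0 : ℤ) : ℚ) / dd vQ := by
        show (-(2 * vQ 1 0) - vQ 0 0) / dd vQ = _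
        rw [hvQc, hvQc]; push_cast; ring_nf
      rw [huv, hDcast]
    · refine ⟨-(v 1 1) - 2 * v 0 1, ?_⟩
      have huv : uu vQ 1 0 = ((-(v 1 1) - 2 * v 0 1 : ℤ) : ℚ) / dd vQ := by
        show (-(vQ 1 1) - 2 * vQ 0 1) / dd vQ = _
        rw [hvQc, hvQc]; push_cast; ring_nf
      rw [huv, hDcast]
    · refine ⟨v 1 0 + 2 * v 0 0, ?_⟩
      have huv : uu vQ 1 1 = ((v 1 0 + 2 * v 0 0 : ℤ) : ℚ) / dd vQ := by
        show (vQ 1 0 + 2 * vQ 0 0) / dd vQ = _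
        rw [hvQc, hvQc]; push_cast; ring_nf
      rw [huv, hDcast]
    · refine ⟨v 0 1 - v 1 1, ?_⟩
      have huv : uu vQ 2 0 = ((v 0 1 - v 1 1 : ℤ) : ℚ) / dd vQ := by
        show (vQ 0 1 - vQ 1 1) / dd vQ = _
        rw [hvQc, hvQc]; push_cast; ring_nf
      rw [huv, hDcast]
    · refine ⟨v 1 0 - v 0 0, ?_⟩
      have huv : uu vQ 2 1 = ((v 1 0 - v 0 0 : ℤ) : ℚ) / dd vQ := by
        show (vQ 1 0 - vQ 0 0) / dd vQ = _
        rw [hvQc, hvQc]; push_cast; ring_nf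
      rw [huv, hDcast]
  have hDint : ∀ i k, ∃ z : ℤ, ((DA : ℚ)) * uu vQ i k = z := by
    have habs : ((DA : ℚ)) = |(DZ : ℚ)| := by
      rw [hDAdef]
      push_cast [Nat.cast_natAbs]
      rfl
    intro i k
    obtain ⟨z, hz⟩ := hZint i k
    rcases abs_cases ((DZ : ℚ)) with ⟨h1, _⟩ | ⟨h1, _⟩
    · exact ⟨z, by rw [habs, h1, hz]⟩
    · exact ⟨-z, by rw [habs, h1]; push_cast; linear_combination -hz⟩
  set N : ℕ := Finset.univ.lcm (fun p : Fin 3 × Fin 2 => (uu vQ p.1 p.2).den) with hNdef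
  have hden_dvd_N : ∀ i k, (uu vQ i k).den ∣ N :=
    fun i k => Finset.dvd_lcm (Finset.mem_univ (i, k))
  have hNdvd : N ∣ DA :=
    Finset.lcm_dvd fun p _ => den_dvd_of_mul_int _ _ (hDint p.1 p.2)
  have hNpos : 0 < N := Nat.pos_of_dvd_of_pos hNdvd hDApos
  have hNodd : Odd N := by
    rcases Nat.even_or_odd N with he | ho
    · exfalso
      have : (2 : ℕ) ∣ DA := dvd_trans he.two_dvd hNdvd
      have : Even DA := even_iff_two_dvd.mpr this
      exact (Nat.not_even_iff_odd.mpr hDAodd) this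
    · exact ho
  -- the Gorenstein set
  have hSmem : ∀ n : ℕ, 0 < n →
      (IsLatticeSet ((n : ℚ) • dualBody (simplexHull vQ)) ↔
        ∀ i k, ∃ z : ℤ, (n : ℚ) * uu vQ i k = z) := by
    intro n hn
    rw [dualBody_simplexHull]
    exact lattice_iff hsumQ hDne n hn
  have hGor' : sInf {n : ℕ | 0 < n ∧ IsLatticeSet ((n : ℚ) • dualBody (simplexHull vQ))} = g := by
    rw [← hGor]; rfl
  set S : Set ℕ := {n : ℕ | 0 < n ∧ IsLatticeSet ((n : ℚ) • dualBody (simplexHull vQ))} with hSdef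
  have hNin : N ∈ S :=
    ⟨hNpos, (hSmem N hNpos).mpr fun i k => mul_int_of_den_dvd _ _ (hden_dvd_N i k)⟩
  have hmem : sInf S ∈ S := Nat.sInf_mem ⟨N, hNin⟩
  have hle : sInf S ≤ N := Nat.sInf_le hNin
  obtain ⟨hpos, hlat⟩ := hmem
  have hint' := (hSmem _ hpos).mp hlat
  have hNdvdm : N ∣ sInf S :=
    Finset.lcm_dvd fun p _ => den_dvd_of_mul_int _ _ (hint' p.1 p.2)
  have hfin : sInf S = N := le_antisymm hle (Nat.le_of_dvd hpos hNdvdm)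
  rw [← hGor', hfin]
  exact hNodd
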